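/- Let p be a prime number and let G_p := ∏_{m=1}^∞ (1 − X^{pm})^p · (∏_{m=1}^∞ (1 − X^m))⁻¹ ∈ ℤ⟦X⟧. Then for every integer d with 0 ≤ d < p, the coefficient of X^d in G_p equals the number of partitions of d; in particular it is strictly positive. Consequently, for a prime p ≥ 11 the coefficients c(n) of η(pτ)^p/η(τ) satisfy c(n) = 0 for 1 ≤ n < (p²−1)/24 and c(n) ≠ 0 for (p²−1)/24 ≤ n < (p²−1)/24 + p. -/

import Mathlib

open PowerSeries

/-- The product topology (X-adic topology) on `ℤ⟦X⟧`. -/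
noncomputable instance : TopologicalSpace (PowerSeries ℤ) :=
  inferInstanceAs (TopologicalSpace ((Unit →₀ ℕ) → ℤ))

/-- `G_p = ∏_{m=1}^∞ (1 − X^{pm})^p · (∏_{m=1}^∞ (1 − X^m))⁻¹ ∈ ℤ⟦X⟧`. -/
noncomputable def G (p : ℕ) : PowerSeries ℤ :=
  (∏' m : ℕ+, (1 - (X : PowerSeries ℤ) ^ (p * (m : ℕ))) ^ p) *
    Ring.inverse (∏' m : ℕ+, (1 - (X : PowerSeries ℤ) ^ (m : ℕ)))

/-- `c p n`, the coefficient of `X^n` in the q-expansion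
`X^{(p²−1)/24} · G_p` of the eta-product `η(pτ)^p/η(τ)`. -/
noncomputable def c (p n : ℕ) : ℤ :=
  PowerSeries.coeff n ((X : PowerSeries ℤ) ^ ((p ^ 2 - 1) / 24) * G p)

/-!
Every factor `(1 - X^{pm})^p` of the numerator of `G_p` is `≡ 1 mod X^p`, and the series
`≡ 1 mod X^p` form a closed submonoid of `ℤ⟦X⟧`, so the whole infinite product is
`≡ 1 mod X^p`.
Hence below degree `p` the series `G_p` agrees with `(∏ (1 - X^m))⁻¹`, which is Euler's
generating function of the partition numbers. Multiplying by `X^{(p²-1)/24}` only shifts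
coefficients.
-/

open scoped PowerSeries.WithPiTopology

section CommRing

variable {A : Type*} [CommRing A]

def dvdSubOneSubmonoid (a : A) : Submonoid A where
  carrier := {g | a ∣ g - 1}
  one_mem' := by simp
  mul_mem' {g h} hg hh := by
    have : g * h - 1 = g * (h - 1) + (g - 1) := by ring
    simpa only [Set.mem_ofPred_eq, this] using dvd_add (dvd_mul_of_dvd_right hh g) hg

theorem coeff_mul_eq_of_X_pow_dvd_sub_one {a : A⟦X⟧} {n d : ℕ} (ha : X ^ n ∣ a - 1)
    (hd : d < n) (b : A⟦X⟧) : coeff d (a * b) = coeff d b := by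
  have hab : X ^ n ∣ a * b - b := by simpa only [sub_mul, one_mul] using ha.mul_right b
  simpa only [map_sub, sub_eq_zero] using X_pow_dvd_iff.1 hab d hd

end CommRing

section Topological

variable {R : Type*} [CommRing R] [TopologicalSpace R]

theorem isClosed_dvdSubOneSubmonoid_X_pow [T1Space R] (n : ℕ) :
    IsClosed (dvdSubOneSubmonoid (X ^ n : R⟦X⟧) : Set R⟦X⟧) := by
  have hset : (dvdSubOneSubmonoid (X ^ n : R⟦X⟧) : Set R⟦X⟧) =
      ⋂ d ∈ Set.Iio n, coeff d ⁻¹' {coeff d 1} := by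
    ext g
    simp [dvdSubOneSubmonoid, X_pow_dvd_iff, sub_eq_zero]
  rw [hset]
  exact isClosed_biInter fun d _ ↦
    isClosed_singleton.preimage (WithPiTopology.continuous_coeff R d)

theorem X_pow_dvd_tprod_sub_one [T1Space R] {ι : Type*} {f : ι → R⟦X⟧} {n : ℕ}
    (h : ∀ i, X ^ n ∣ f i - 1) : X ^ n ∣ (∏' i, f i) - 1 :=
  tprod_mem (isClosed_dvdSubOneSubmonoid_X_pow n) h

theorem X_pow_dvd_tprod_one_sub_X_pow_mul_pow_sub_one [T1Space R] (n e : ℕ) :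
    X ^ n ∣ (∏' m : ℕ+, (1 - X ^ (n * (m : ℕ)) : R⟦X⟧) ^ e) - 1 := by
  refine X_pow_dvd_tprod_sub_one fun m ↦ pow_mem (S := dvdSubOneSubmonoid _) ?_ e
  show (X ^ n : R⟦X⟧) ∣ (1 - X ^ (n * (m : ℕ))) - 1
  rw [sub_sub_cancel_left]
  exact (pow_dvd_pow X (Nat.le_mul_of_pos_right n m.pos)).neg_right

variable [IsTopologicalRing R] [T2Space R]

theorem powerSeriesMk_card_partition_mul_tprod_one_sub_X_pow :
    (mk fun n ↦ (Fintype.card n.Partition : R)) * ∏' i : ℕ, (1 - X ^ (i + 1)) = 1 := by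
  have hP := Nat.Partition.hasProd_powerSeriesMk_card_restricted R (fun _ ↦ True)
  simp only [↓reduceIte, Nat.Partition.restricted, implies_true, Finset.filter_true,
    Finset.card_univ] at hP
  have h := hP.mul (WithPiTopology.multipliable_one_sub_X_pow R).hasProd
  have geom (i : ℕ) : (∑' j : ℕ, (X ^ (i + 1) : R⟦X⟧) ^ j) * (1 - X ^ (i + 1)) = 1 :=
    WithPiTopology.tsum_pow_mul_one_sub_of_constantCoeff_eq_zero (by simp)
  simp only [pow_mul, geom] at h
  exact h.unique hasProd_one

theorem inverse_tprod_one_sub_X_pow :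
    Ring.inverse (∏' m : ℕ+, (1 - X ^ (m : ℕ) : R⟦X⟧)) =
      mk fun n ↦ (Fintype.card n.Partition : R) := by
  have h := powerSeriesMk_card_partition_mul_tprod_one_sub_X_pow (R := R)
  rw [tprod_pnat_eq_tprod_succ (f := fun k ↦ 1 - (X : R⟦X⟧) ^ k)]
  simpa using ((Ring.eq_mul_inverse_iff_mul_eq _ 1 _ (IsUnit.of_mul_eq_one_right _ h)).2 h).symm

end Topological

theorem coeff_G_of_lt {p d : ℕ} (hd : d < p) : coeff d (G p) = Fintype.card d.Partition := by
  -- The topology on `ℤ⟦X⟧` fixed above is definitionally, but not reducibly, the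
  -- `WithPiTopology` one, so the general lemmas are restated at `ℤ` before rewriting.
  have hnum : X ^ p ∣ (∏' m : ℕ+, (1 - X ^ (p * (m : ℕ)) : ℤ⟦X⟧) ^ p) - 1 :=
    X_pow_dvd_tprod_one_sub_X_pow_mul_pow_sub_one p p
  have hden : Ring.inverse (∏' m : ℕ+, (1 - X ^ (m : ℕ) : ℤ⟦X⟧)) =
      mk fun n ↦ (Fintype.card n.Partition : ℤ) :=
    inverse_tprod_one_sub_X_pow
  rw [G, hden, coeff_mul_eq_of_X_pow_dvd_sub_one hnum hd, coeff_mk]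

theorem coeff_G_eq_partition_count_general (p : ℕ) :
    (∀ d : ℕ, d < p →
      PowerSeries.coeff d (G p) = Fintype.card (Nat.Partition d) ∧
      0 < PowerSeries.coeff d (G p)) ∧
    (11 ≤ p →
      (∀ n : ℕ, 1 ≤ n → n < (p ^ 2 - 1) / 24 → c p n = 0) ∧
      (∀ n : ℕ, (p ^ 2 - 1) / 24 ≤ n → n < (p ^ 2 - 1) / 24 + p → c p n ≠ 0)) := by
  have hpos {d : ℕ} (hd : d < p) : 0 < coeff d (G p) := by
    rw [coeff_G_of_lt hd]
    exact_mod_cast Fintype.card_pos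
  refine ⟨fun d hd ↦ ⟨coeff_G_of_lt hd, hpos hd⟩, fun _ ↦ ⟨fun n _ hn ↦ ?_, fun n hn hn' ↦ ?_⟩⟩
  · rw [c, coeff_X_pow_mul', if_neg (by omega)]
  · rw [c, coeff_X_pow_mul', if_pos hn]
    exact (hpos (by omega)).ne'

/-- For a prime `p` and `0 ≤ d < p`, the coefficient of `X^d` in `G_p` is the number of
partitions of `d`; in particular it is positive.  Consequently, for a prime `p ≥ 11`
the coefficients `c(n)` of `η(pτ)^p/η(τ)` vanish for `1 ≤ n < (p²−1)/24` and are
nonzero for `(p²−1)/24 ≤ n < (p²−1)/24 + p`. -/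
theorem coeff_G_eq_partition_count (p : ℕ) (hp : p.Prime) :
    (∀ d : ℕ, d < p →
      PowerSeries.coeff d (G p) = Fintype.card (Nat.Partition d) ∧
      0 < PowerSeries.coeff d (G p)) ∧
    (11 ≤ p →
      (∀ n : ℕ, 1 ≤ n → n < (p ^ 2 - 1) / 24 → c p n = 0) ∧
      (∀ n : ℕ, (p ^ 2 - 1) / 24 ≤ n → n < (p ^ 2 - 1) / 24 + p → c p n ≠ 0)) :=
  coeff_G_eq_partition_count_general p
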